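/- Every language recognised by an L(/→)-grammar with types of degree at most 1 is a regular language (not containing the empty string). -/
import Mathlib


/-- slash-only types over primitives `P`. `div β α` denotes `β/α`. -/
inductive Tp (P : Type) : Type
  | pr : P → Tp P
  | div : Tp P → Tp P → Tp P

open Tp

/-- The calculus L(/→) with Cut: Axiom, rule (/→), Cut. -/
inductive Der {P : Type} : List (Tp P) → Tp P → Prop
  | ax (α : Tp P) : Der [α] α
  | slash {Γ Δ Θ : List (Tp P)} {α β γ : Tp P} :
      Der Γ α → Der (Δ ++ β :: Θ) γ → Der (Δ ++ div β α :: (Γ ++ Θ)) γ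
  | cut {Γ Θ Δ : List (Tp P)} {α β : Tp P} :
      Der (Γ ++ α :: Θ) β → Der Δ α → Der (Γ ++ (Δ ++ Θ)) β

/-- Cut-free L(/→): only Axiom and (/→). -/
inductive DerCF {P : Type} : List (Tp P) → Tp P → Prop
  | ax (α : Tp P) : DerCF [α] α
  | slash {Γ Δ Θ : List (Tp P)} {α β γ : Tp P} :
      DerCF Γ α → DerCF (Δ ++ β :: Θ) γ → DerCF (Δ ++ div β α :: (Γ ++ Θ)) γ

/-- `mk δ [β₁, ..., βₙ] = (⋯((δ/βₙ)/βₙ₋₁)/⋯)/β₁`. -/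
def mk {P : Type} (δ : Tp P) : List (Tp P) → Tp P
  | [] => δ
  | b :: bs => div (mk δ bs) b

/-- Degree: number of occurrences of `/`. -/
def deg {P : Type} : Tp P → ℕ
  | pr _ => 0
  | div a b => deg a + deg b + 1

/-- A Lambek grammar over slash-only types: primitive types `P`, alphabet `V`,
distinguished primitive type `S`, finite type assignment `f`. -/
structure LGrammar (P V : Type) where
  S : P
  f : V → Set (Tp P)
  fin : ∀ a : V, (f a).Finite

/-- The language recognised by a Lambek grammar. -/
def LGrammar.Lang {P V : Type} (G : LGrammar P V) : Set (List V) :=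
  {w | ∃ Γ : List (Tp P), List.Forall₂ (fun a α => α ∈ G.f a) w Γ ∧ Der Γ (pr G.S)}

/-- A right-regular grammar: productions `A → aB` (`rule`) and `A → a` (`term`). -/
structure RegGrammar (N T : Type) where
  S : N
  rule : N → T → N → Prop
  term : N → T → Prop

/-- Generation relation of a right-regular grammar. -/
inductive RegGen {N T : Type} (G : RegGrammar N T) : N → List T → Prop
  | term {A : N} {a : T} : G.term A a → RegGen G A [a]
  | step {A B : N} {a : T} {w : List T} : G.rule A a B → RegGen G B w → RegGen G A (a :: w)

/-- The language generated by a right-regular grammar. -/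
def RegGrammar.Lang {N T : Type} (G : RegGrammar N T) : Set (List T) :=
  {w | RegGen G G.S w}

section Aux
variable {P : Type}

/-- Cut admissibility in the cut-free calculus (induction on the derivation of the
cut formula; no right rules are present). -/
lemma cut_adm {Δ : List (Tp P)} {α : Tp P} (d2 : DerCF Δ α) :
    ∀ {Γ Θ : List (Tp P)} {β : Tp P}, DerCF (Γ ++ α :: Θ) β → DerCF (Γ ++ (Δ ++ Θ)) β := by
  induction d2 with
  | ax α => intro Γ Θ β h; simpa using h
  | @slash Γ₀ Δ₀ Θ₀ α₀ β₀ γ₀ dl dr ihl ihr =>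
    intro Γ Θ β h
    have h1 := ihr (Γ := Γ) (Θ := Θ) h
    have h2 : DerCF ((Γ ++ Δ₀) ++ β₀ :: (Θ₀ ++ Θ)) β := by
      simpa using h1
    have h3 := DerCF.slash dl h2
    simpa using h3

lemma der_to_cf {Γ : List (Tp P)} {γ : Tp P} (h : Der Γ γ) : DerCF Γ γ := by
  induction h with
  | ax α => exact DerCF.ax α
  | slash _ _ ih1 ih2 => exact DerCF.slash ih1 ih2
  | cut _ _ ih1 ih2 => exact cut_adm ih2 ih1

/-- Chains: `[S/B₂, B₂/B₃, …, B_{k-1}/B_k, B_k]`. -/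
inductive Chain : List (Tp P) → P → Prop
  | single (S : P) : Chain [Tp.pr S] S
  | cons {Γ : List (Tp P)} {S A : P} : Chain Γ A → Chain (Tp.div (Tp.pr S) (Tp.pr A) :: Γ) S

lemma chain_der {Γ : List (Tp P)} {S : P} (h : Chain Γ S) : Der Γ (Tp.pr S) := by
  induction h with
  | single S => exact Der.ax _
  | @cons Γ S A _ ih =>
    have := Der.slash (Δ := []) (Θ := []) ih (Der.ax (Tp.pr S))
    simpa using this

lemma chain_mid {L : List (Tp P)} {S : P} (h : Chain L S) :
    ∀ (Δ : List (Tp P)) (b : P) (Θ : List (Tp P)), L = Δ ++ Tp.pr b :: Θ →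
      Θ = [] ∧ ∀ (Γ' : List (Tp P)) (a : P), Chain Γ' a →
        Chain (Δ ++ Tp.div (Tp.pr b) (Tp.pr a) :: Γ') S := by
  induction h with
  | single S =>
    intro Δ b Θ hE
    match Δ, hE with
    | [], hE =>
      obtain ⟨h1, h2⟩ := by simpa using hE
      cases h1; cases h2
      exact ⟨rfl, fun Γ' a hc => Chain.cons hc⟩
    | x :: Δ, hE => simp at hE
  | @cons Γ S A hΓ ih =>
    intro Δ b Θ hE
    match Δ, hE with
    | [], hE => simp at hE
    | x :: Δ, hE =>
      obtain ⟨h1, h2⟩ := by simpa using hE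
      cases h1
      obtain ⟨hΘ, hrec⟩ := ih Δ b Θ h2
      exact ⟨hΘ, fun Γ' a hc => Chain.cons (hrec Γ' a hc)⟩

lemma deg_zero {τ : Tp P} (h : deg τ = 0) : ∃ p, τ = Tp.pr p := by
  cases τ with
  | pr p => exact ⟨p, rfl⟩
  | div a b => simp [deg] at h

lemma derCF_chain {L : List (Tp P)} {γ : Tp P} (h : DerCF L γ) :
    (∀ τ ∈ L, deg τ ≤ 1) → ∀ S : P, γ = Tp.pr S → Chain L S := by
  induction h with
  | ax α =>
    intro _ S hS; cases hS; exact Chain.single S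
  | @slash Γ Δ Θ α β γ dl dr ihl ihr =>
    intro hd S hS
    have hdiv : deg (Tp.div β α) ≤ 1 := hd _ (by simp)
    have hβ0 : deg β = 0 := by simp [deg] at hdiv; omega
    have hα0 : deg α = 0 := by simp [deg] at hdiv; omega
    obtain ⟨b, rfl⟩ := deg_zero hβ0
    obtain ⟨a, rfl⟩ := deg_zero hα0
    have hΓd : ∀ τ ∈ Γ, deg τ ≤ 1 := fun τ hτ => hd τ (by simp [hτ])
    have hΔΘd : ∀ τ ∈ Δ ++ Tp.pr b :: Θ, deg τ ≤ 1 := by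
      intro τ hτ
      rcases List.mem_append.1 hτ with h1 | h1
      · exact hd τ (by simp [h1])
      · rcases List.mem_cons.1 h1 with rfl | h2
        · simp [deg]
        · exact hd τ (by simp [h2])
    have hcΓ : Chain Γ a := ihl hΓd a rfl
    have hcR : Chain (Δ ++ Tp.pr b :: Θ) S := ihr hΔΘd S hS
    obtain ⟨hΘ, hrec⟩ := chain_mid hcR Δ b Θ rfl
    subst hΘ
    simpa using hrec Γ a hcΓ

lemma forall₂_mem {V : Type} {R : V → Tp P → Prop} {w : List V} {Γ : List (Tp P)}
    (h : List.Forall₂ R w Γ) : ∀ τ ∈ Γ, ∃ a ∈ w, R a τ := by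
  induction h with
  | nil => simp
  | cons hR _ ih =>
    intro τ hτ
    rcases List.mem_cons.1 hτ with rfl | hτ
    · exact ⟨_, by simp, hR⟩
    · obtain ⟨a, ha, haR⟩ := ih τ hτ
      exact ⟨a, by simp [ha], haR⟩

end Aux

/-- Every language recognised by an L(/→)-grammar with types of degree ≤ 1 is a regular
language not containing the empty string. -/
theorem degree_one_lambek_regular {P V : Type} [Finite P] [Finite V] (G : LGrammar P V)
    (hdeg : ∀ a : V, ∀ α ∈ G.f a, deg α ≤ 1) :
    ([] : List V) ∉ G.Lang ∧
    ∃ (N : Type) (_ : Finite N) (G' : RegGrammar N V), G'.Lang = G.Lang := by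
  classical
  have lang_chain : ∀ w : List V, w ∈ G.Lang ↔
      ∃ Γ : List (Tp P), List.Forall₂ (fun a α => α ∈ G.f a) w Γ ∧ Chain Γ G.S := by
    intro w
    constructor
    · rintro ⟨Γ, hF, hD⟩
      refine ⟨Γ, hF, ?_⟩
      refine derCF_chain (der_to_cf hD) ?_ G.S rfl
      intro τ hτ
      obtain ⟨a, -, ha⟩ := forall₂_mem hF τ hτ
      exact hdeg a τ ha
    · rintro ⟨Γ, hF, hC⟩
      exact ⟨Γ, hF, chain_der hC⟩
  constructor
  · intro h
    rw [lang_chain] at h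
    obtain ⟨Γ, hF, hC⟩ := h
    cases hF
    cases hC
  · refine ⟨P, inferInstance, ⟨G.S, fun A a B => Tp.div (Tp.pr A) (Tp.pr B) ∈ G.f a,
      fun A a => Tp.pr A ∈ G.f a⟩, ?_⟩
    set G' : RegGrammar P V := ⟨G.S, fun A a B => Tp.div (Tp.pr A) (Tp.pr B) ∈ G.f a,
      fun A a => Tp.pr A ∈ G.f a⟩
    have main : ∀ (A : P) (w : List V), RegGen G' A w ↔
        ∃ Γ : List (Tp P), List.Forall₂ (fun a α => α ∈ G.f a) w Γ ∧ Chain Γ A := by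
      intro A w
      constructor
      · intro h
        induction h with
        | @term A a ht =>
          exact ⟨[Tp.pr A], List.Forall₂.cons ht List.Forall₂.nil, Chain.single A⟩
        | @step A B a w hr _ ih =>
          obtain ⟨Γ, hF, hC⟩ := ih
          exact ⟨Tp.div (Tp.pr A) (Tp.pr B) :: Γ, List.Forall₂.cons hr hF, Chain.cons hC⟩
      · rintro ⟨Γ, hF, hC⟩
        induction hC generalizing w with
        | single S =>
          cases hF with
          | cons h hnil => cases hnil; exact RegGen.term h
        | @cons Γ S B _ ih =>
          cases hF with
          | cons h htail => exact RegGen.step h (ih _ htail)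
    ext w
    rw [RegGrammar.Lang, Set.mem_setOf_eq, lang_chain w]
    exact main G.S w
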